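/- Let C be a bialgebra with a projection onto a Hopf algebra H (bialgebra maps i: H → C, π: C → H, π∘i = id_H) and Π = id_C ⋆ (i∘S∘π), i.e., Π(c) = c₁ i(S(π(c₂))). Then (C, Π, Π) is a Rota-Baxter bialgebra of weight (−1, −1): Π satisfies both the Rota-Baxter algebra identity of weight −1 and the Rota-Baxter coalgebra identity of weight −1. -/

import Mathlib

open TensorProduct LinearMap

/-- Rota--Baxter coalgebra of weight `γ`:
`Q(c₁)⊗Q(c₂) = Q(c)₁⊗Q(Q(c)₂) + Q(Q(c)₁)⊗Q(c)₂ + γ Q(c)₁⊗Q(c)₂`. -/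
def IsRotaBaxterCoalgebra (K : Type*) [Field K] {C : Type*} [AddCommGroup C] [Module K C]
    (D : C →ₗ[K] C ⊗[K] C) (Q : C →ₗ[K] C) (γ : K) : Prop :=
  TensorProduct.map Q Q ∘ₗ D =
    lTensor C Q ∘ₗ D ∘ₗ Q + rTensor C Q ∘ₗ D ∘ₗ Q + γ • (D ∘ₗ Q)

/-!
Write `E = i ∘ S ∘ π`, so that `Π = id ⋆ E`. Since `π ∘ i = id`, we get `Π (i h) = ε(h)`, and from
`Π (a b) = a₁ Π(b) E(a₂)` the absorption rule `Π (a · i h) = ε(h) Π(a)`; as `Π y = y₁ i(S π y₂)`,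
this gives `Π (x Π(y)) = Π (x y)`, and likewise `(Π ⊗ id) Δ (Π x) = (Π ⊗ Π) Δ x`.

The second ingredient is that `Π x` is coinvariant, `(id ⊗ π) Δ (Π x) = Π x ⊗ 1`. The map
`G = (id ⊗ π) ∘ Δ` is an algebra map, so `G ∘ Π = G ⋆ (G ∘ E)`; in the convolution algebra
`G = (Π ⊗ 1) ⋆ (G ∘ i ∘ π)` because `Π ⋆ (i ∘ π) = id`, and `(i ∘ π) ⋆ E = 1` then leaves
`G ∘ Π = Π ⊗ 1`. Coinvariance turns `Π (Π(x) y) = Π(x)₁ Π(y) E(Π(x)₂)` into `Π(x) Π(y)` and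
`(id ⊗ Π) Δ (Π x)` into `Δ (Π x)`. In both Rota–Baxter identities of weight `-1` the surplus term
then cancels against the weight term.
-/

open Coalgebra WithConv

section Convolution

variable {R A B C D : Type*} [CommSemiring R] [Semiring A] [Algebra R A] [Semiring B] [Algebra R B]
  [AddCommMonoid C] [Module R C] [Coalgebra R C] [AddCommMonoid D] [Module R D] [Coalgebra R D]

lemma toConv_algHom_comp_convMul (φ : A →ₐ[R] B) (f g : C →ₗ[R] A) :
    toConv (φ.toLinearMap ∘ₗ (toConv f * toConv g).ofConv) =
      toConv (φ.toLinearMap ∘ₗ f) * toConv (φ.toLinearMap ∘ₗ g) :=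
  congrArg toConv (algHom_comp_convMul_distrib φ _ _)

lemma toConv_algHom_comp_one (φ : A →ₐ[R] B) :
    toConv (φ.toLinearMap ∘ₗ (1 : WithConv (C →ₗ[R] A)).ofConv) = 1 := by
  ext c; simp

lemma algHom_comp_convMul_comp_coalgHom (φ : A →ₐ[R] B) (ψ : C →ₗc[R] D) (f g : D →ₗ[R] A) :
    toConv (φ.toLinearMap ∘ₗ (toConv f * toConv g).ofConv ∘ₗ ψ.toLinearMap) =
      toConv (φ.toLinearMap ∘ₗ f ∘ₗ ψ.toLinearMap) *
        toConv (φ.toLinearMap ∘ₗ g ∘ₗ ψ.toLinearMap) := by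
  rw [convMul_comp_coalgHom_distrib, toConv_algHom_comp_convMul]

lemma algHom_comp_one_comp_coalgHom (φ : A →ₐ[R] B) (ψ : C →ₗc[R] D) :
    toConv (φ.toLinearMap ∘ₗ (1 : WithConv (D →ₗ[R] A)).ofConv ∘ₗ ψ.toLinearMap) = 1 := by
  ext c; simp

lemma includeLeft_convMul_includeRight (f : C →ₗ[R] A) (g : C →ₗ[R] B) :
    toConv ((Algebra.TensorProduct.includeLeft : A →ₐ[R] A ⊗[R] B).toLinearMap ∘ₗ f) *
      toConv ((Algebra.TensorProduct.includeRight : B →ₐ[R] A ⊗[R] B).toLinearMap ∘ₗ g) =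
    toConv (map f g ∘ₗ comul) := by
  ext c
  simp only [convMul_apply, comp_apply]
  induction comul (R := R) c using TensorProduct.induction_on with
  | zero => simp
  | tmul a b => simp
  | add x y hx hy => simp_all

def IsCoinvariant (π : C →ₗ[R] A) (y : C) : Prop :=
  lTensor C π (comul y) = y ⊗ₜ[R] 1

lemma IsCoinvariant.convMul_comp_apply {π : C →ₗ[R] A} {y : C} (hy : IsCoinvariant π y)
    (f : C →ₗ[R] B) (g : A →ₗ[R] B) :
    (toConv f * toConv (g ∘ₗ π)) y = f y * g 1 := by
  rw [convMul_apply, ofConv_toConv, ofConv_toConv, ← map_comp_lTensor, comp_apply, hy]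
  simp

end Convolution

section Projection

variable {R H C : Type*} [CommSemiring R] [Semiring H] [HopfAlgebra R H]
  [Semiring C] [Bialgebra R C] (i : H →ₐc[R] C) (π : C →ₐc[R] H)

noncomputable def twistedAntipode : C →ₗ[R] C :=
  (i : H →ₗ[R] C) ∘ₗ HopfAlgebra.antipode R ∘ₗ (π : C →ₗ[R] H)

noncomputable def coinvariantProj : C →ₗ[R] C :=
  (toConv LinearMap.id * toConv (twistedAntipode i π)).ofConv

lemma twistedAntipode_apply (c : C) :
    twistedAntipode i π c = i (HopfAlgebra.antipode R (π c)) := rfl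

lemma twistedAntipode_eq_comp :
    twistedAntipode i π = ((i : H →ₗ[R] C) ∘ₗ HopfAlgebra.antipode R) ∘ₗ (π : C →ₗ[R] H) := rfl

lemma twistedAntipode_mul (x y : C) :
    twistedAntipode i π (x * y) = twistedAntipode i π y * twistedAntipode i π x := by
  simp [twistedAntipode_apply, HopfAlgebra.antipode_mul_antidistrib]

lemma twistedAntipode_convMul_inclProj :
    toConv (twistedAntipode i π) * toConv ((i : H →ₗ[R] C) ∘ₗ (π : C →ₗ[R] H)) = 1 := by
  have h := algHom_comp_convMul_comp_coalgHom (i : H →ₐ[R] C) (π : C →ₗc[R] H)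
    (HopfAlgebra.antipode R) .id
  rwa [toConv_ofConv, antipode_mul_id, algHom_comp_one_comp_coalgHom, id_comp, eq_comm] at h

lemma inclProj_convMul_twistedAntipode :
    toConv ((i : H →ₗ[R] C) ∘ₗ (π : C →ₗ[R] H)) * toConv (twistedAntipode i π) = 1 := by
  have h := algHom_comp_convMul_comp_coalgHom (i : H →ₐ[R] C) (π : C →ₗc[R] H)
    .id (HopfAlgebra.antipode R)
  rwa [toConv_ofConv, id_mul_antipode, algHom_comp_one_comp_coalgHom, id_comp, eq_comm] at h

lemma coinvariantProj_convMul_inclProj :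
    toConv (coinvariantProj i π) * toConv ((i : H →ₗ[R] C) ∘ₗ (π : C →ₗ[R] H)) =
      toConv LinearMap.id := by
  rw [coinvariantProj, toConv_ofConv, mul_assoc, twistedAntipode_convMul_inclProj, mul_one]

lemma coinvariantProj_apply {c : C} {ι : Type*} (𝓡 : Repr R c ι) :
    coinvariantProj i π c = ∑ k ∈ 𝓡.index, 𝓡.left k * twistedAntipode i π (𝓡.right k) :=
  𝓡.convMul_apply _ _

lemma coinvariantProj_mul (a b : C) :
    coinvariantProj i π (a * b) =
      (toConv (mulRight R (coinvariantProj i π b)) * toConv (twistedAntipode i π)) a := by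
  rw [coinvariantProj_apply i π ((ℛ R a).mul (ℛ R b)), (ℛ R a).convMul_apply,
    Repr.mul_index, Finset.sum_product]
  refine Finset.sum_congr rfl fun s _ => ?_
  simp only [Repr.mul_left, Repr.mul_right, twistedAntipode_mul, mulRight_apply,
    coinvariantProj_apply i π (ℛ R b), Finset.mul_sum, Finset.sum_mul, mul_assoc]

lemma coinvariantProj_apply_incl (hπi : ∀ h, π (i h) = h) (h : H) :
    coinvariantProj i π (i h) = algebraMap R C (counit h) := by
  rw [coinvariantProj_apply i π ((ℛ R h).induced i)]
  simp_rw [Repr.induced_index, Repr.induced_left, Repr.induced_right, Function.comp_apply,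
    twistedAntipode_apply, hπi, ← map_mul, ← map_sum,
    HopfAlgebra.sum_mul_antipode_eq_algebraMap_counit, AlgHomClass.commutes]

lemma coinvariantProj_mul_incl (hπi : ∀ h, π (i h) = h) (a : C) (h : H) :
    coinvariantProj i π (a * i h) = counit (R := R) h • coinvariantProj i π a := by
  rw [coinvariantProj_mul, coinvariantProj_apply_incl i π hπi, coinvariantProj_apply i π (ℛ R a),
    (ℛ R a).convMul_apply, Finset.smul_sum]
  simp [Algebra.commutes, Algebra.smul_def, mul_assoc]

lemma coinvariantProj_mul_coinvariantProj (hπi : ∀ h, π (i h) = h) (x y : C) :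
    coinvariantProj i π (x * coinvariantProj i π y) = coinvariantProj i π (x * y) := by
  calc coinvariantProj i π (x * coinvariantProj i π y)
      = (toConv (coinvariantProj i π ∘ₗ mulLeft R x) * 1) y := by
        rw [coinvariantProj_apply i π (ℛ R y), (ℛ R y).convMul_apply, Finset.mul_sum, map_sum]
        refine Finset.sum_congr rfl fun k _ => ?_
        rw [twistedAntipode_apply, ← mul_assoc, coinvariantProj_mul_incl i π hπi]
        simp [Algebra.smul_def, Algebra.commutes]
    _ = coinvariantProj i π (x * y) := by rw [mul_one]; rfl

section Coinvariance

local notation "incL" => AlgHom.toLinearMap (Algebra.TensorProduct.includeLeft : C →ₐ[R] C ⊗[R] H)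
local notation "incR" => AlgHom.toLinearMap (Algebra.TensorProduct.includeRight : H →ₐ[R] C ⊗[R] H)

lemma isCoinvariant_coinvariantProj (hπi : ∀ h, π (i h) = h) (x : C) :
    IsCoinvariant (π : C →ₗ[R] H) (coinvariantProj i π x) := by
  set P := coinvariantProj i π
  set E := twistedAntipode i π
  set ι := (i : H →ₗ[R] C) ∘ₗ (π : C →ₗ[R] H)
  let G : C →ₐ[R] C ⊗[R] H :=
    (Algebra.TensorProduct.map (AlgHom.id R C) (π : C →ₐ[R] H)).comp (Bialgebra.comulAlgHom R C)
  have hG : toConv G.toLinearMap = toConv (incL ∘ₗ .id) * toConv (incR ∘ₗ (π : C →ₗ[R] H)) := by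
    rw [includeLeft_convMul_includeRight]
    rfl
  have hGι : toConv (G.toLinearMap ∘ₗ ι) =
      toConv (incL ∘ₗ ι) * toConv (incR ∘ₗ (π : C →ₗ[R] H)) := by
    ext c
    simp only [convMul_apply, comp_apply, ι, BialgHom.coe_toLinearMap]
    change Algebra.TensorProduct.map (AlgHom.id R C) (π : C →ₐ[R] H) (comul (i (π c))) = _
    rw [← CoalgHomClass.map_comp_comul_apply i, ← CoalgHomClass.map_comp_comul_apply π]
    induction comul (R := R) c using TensorProduct.induction_on with
    | zero => simp
    | tmul a b => simp [hπi]
    | add x y hx hy => simp_all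
  have hsplit : toConv G.toLinearMap = toConv (incL ∘ₗ P) * toConv (G.toLinearMap ∘ₗ ι) := by
    rw [hGι, ← mul_assoc, ← toConv_algHom_comp_convMul, coinvariantProj_convMul_inclProj]
    exact hG
  have hmap : toConv (G.toLinearMap ∘ₗ P) = toConv (incL ∘ₗ P) := calc
    _ = toConv G.toLinearMap * toConv (G.toLinearMap ∘ₗ E) := toConv_algHom_comp_convMul G .id E
    _ = toConv (incL ∘ₗ P) * toConv (G.toLinearMap ∘ₗ (toConv ι * toConv E).ofConv) := by
        rw [hsplit, mul_assoc, toConv_algHom_comp_convMul]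
    _ = toConv (incL ∘ₗ P) := by
        rw [inclProj_convMul_twistedAntipode, toConv_algHom_comp_one, mul_one]
  exact congr(($hmap).ofConv x)

end Coinvariance

lemma coinvariantProj_coinvariantProj_mul (hπi : ∀ h, π (i h) = h) (x y : C) :
    coinvariantProj i π (coinvariantProj i π x * y) =
      coinvariantProj i π x * coinvariantProj i π y := by
  rw [coinvariantProj_mul, twistedAntipode_eq_comp,
    (isCoinvariant_coinvariantProj i π hπi x).convMul_comp_apply]
  simp [HopfAlgebra.antipode_one]

section Comultiplication

local notation "incL" => AlgHom.toLinearMap (Algebra.TensorProduct.includeLeft : C →ₐ[R] C ⊗[R] C)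
local notation "incR" => AlgHom.toLinearMap (Algebra.TensorProduct.includeRight : C →ₐ[R] C ⊗[R] C)

lemma lTensor_comul_coinvariantProj (hπi : ∀ h, π (i h) = h) (x : C) :
    lTensor C (coinvariantProj i π) (comul (coinvariantProj i π x)) =
      comul (coinvariantProj i π x) := by
  have hconv : toConv (lTensor C (coinvariantProj i π) ∘ₗ comul) =
      toConv comul *
        toConv ((incR ∘ₗ (i : H →ₗ[R] C) ∘ₗ HopfAlgebra.antipode R) ∘ₗ (π : C →ₗ[R] H)) := calc
    _ = toConv (incL ∘ₗ .id) * toConv (incR ∘ₗ coinvariantProj i π) :=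
        (includeLeft_convMul_includeRight _ _).symm
    _ = toConv (incL ∘ₗ .id) * toConv (incR ∘ₗ .id) * toConv (incR ∘ₗ twistedAntipode i π) := by
        rw [coinvariantProj, toConv_algHom_comp_convMul, mul_assoc]
    _ = _ := by
        rw [includeLeft_convMul_includeRight, map_id, id_comp]
        rfl
  rw [← comp_apply (lTensor C _), ← ofConv_toConv (lTensor C _ ∘ₗ comul), hconv,
    (isCoinvariant_coinvariantProj i π hπi x).convMul_comp_apply]
  simp [HopfAlgebra.antipode_one, ← Algebra.TensorProduct.one_def]

lemma rTensor_mul_comul_incl (hπi : ∀ h, π (i h) = h) (t : C ⊗[R] C) (h : H) :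
    rTensor C (coinvariantProj i π) (t * comul (i h)) =
      rTensor C (coinvariantProj i π) t * (1 ⊗ₜ i h) := by
  induction t using TensorProduct.induction_on with
  | zero => simp
  | tmul a b =>
    rw [← ((ℛ R h).induced i).eq, Finset.mul_sum, map_sum]
    simp only [Repr.induced_index, Repr.induced_left, Repr.induced_right, Function.comp_apply,
      Algebra.TensorProduct.tmul_mul_tmul, rTensor_tmul, coinvariantProj_mul_incl i π hπi]
    simp_rw [TensorProduct.smul_tmul, ← mul_smul_comm, ← map_smul i, ← TensorProduct.tmul_sum,
      ← Finset.mul_sum, ← map_sum, sum_counit_smul, mul_one]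
  | add x y hx hy => simp_all [add_mul]

lemma rTensor_comul_coinvariantProj (hπi : ∀ h, π (i h) = h) (x : C) :
    rTensor C (coinvariantProj i π) (comul (coinvariantProj i π x)) =
      map (coinvariantProj i π) (coinvariantProj i π) (comul x) := by
  have hsweedler : rTensor C (coinvariantProj i π) (comul (coinvariantProj i π x)) =
      (toConv (rTensor C (coinvariantProj i π) ∘ₗ comul) *
        toConv (incR ∘ₗ twistedAntipode i π)) x := by
    rw [coinvariantProj_apply i π (ℛ R x), (ℛ R x).convMul_apply, map_sum, map_sum]
    refine Finset.sum_congr rfl fun k _ => ?_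
    rw [Bialgebra.comul_mul, twistedAntipode_apply, rTensor_mul_comul_incl i π hπi]
    rfl
  have hconv : toConv (rTensor C (coinvariantProj i π) ∘ₗ comul) *
      toConv (incR ∘ₗ twistedAntipode i π) =
      toConv (map (coinvariantProj i π) (coinvariantProj i π) ∘ₗ comul) := calc
    _ = toConv (incL ∘ₗ coinvariantProj i π) * toConv (incR ∘ₗ .id) *
          toConv (incR ∘ₗ twistedAntipode i π) := by
        rw [includeLeft_convMul_includeRight]
        rfl
    _ = _ := by
        rw [mul_assoc, ← toConv_algHom_comp_convMul, ← coinvariantProj,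
          includeLeft_convMul_includeRight]
  rw [hsweedler, hconv]
  rfl

end Comultiplication

end Projection

theorem bialgebraWithProjection_rotaBaxterBialgebra
    (K : Type*) [Field K]
    (H : Type*) [Ring H] [HopfAlgebra K H]
    (C : Type*) [Ring C] [Bialgebra K C]
    (i : H →ₐc[K] C) (π : C →ₐc[K] H) (hπi : ∀ h : H, π (i h) = h)
    -- Π = id_C ⋆ (i ∘ S ∘ π), i.e. Π(c) = c₁ i(S(π(c₂)))
    (Pi : C →ₗ[K] C)
    (hPi : Pi = LinearMap.mul' K C ∘ₗ
      lTensor C (i.toLinearMap ∘ₗ HopfAlgebra.antipode (R := K) ∘ₗ π.toLinearMap) ∘ₗ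
        Coalgebra.comul (R := K)) :
    (∀ x y : C, Pi x * Pi y = Pi (x * Pi y) + Pi (Pi x * y) - Pi (x * y)) ∧
    IsRotaBaxterCoalgebra K (Coalgebra.comul (R := K)) Pi (-1) := by
  obtain rfl : Pi = coinvariantProj i π := hPi
  refine ⟨fun x y => ?_, LinearMap.ext fun x => ?_⟩
  · rw [coinvariantProj_mul_coinvariantProj i π hπi, coinvariantProj_coinvariantProj_mul i π hπi,
      add_sub_cancel_left]
  · simp only [comp_apply, LinearMap.add_apply, LinearMap.smul_apply, lTensor_comul_coinvariantProj i π hπi,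
      rTensor_comul_coinvariantProj i π hπi, neg_one_smul, add_neg_cancel_comm]
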